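/- In the setup below, the geodesic curvature κ_γ of the timelike pseudo-spherical projection γ and the geodesic curvature κ_g of α satisfy the inequality κ_γ(t)²·sin²(η(t)) ≤ w(t)⁴·κ_g(t)² for all t ∈ ℝ. -/

import Mathlib

open Real

/-!
Let `ν = γ'' - γ` be the acceleration of `γ` inside `𝕊₁²`. It is orthogonal to `p`, `γ`, `γ'`,
so `det(γ, γ', γ'', p)² = ⟨ν, ν⟩ = κ_γ²`, and it is orthogonal to `α` and `α'`. Modulo
`span(p, γ, γ')` the acceleration `α''` is `sin η • γ''`, so pairing the Frenet equation
`T' = w (α + κ_g N)` with `ν` gives `w² κ_g ⟨N, ν⟩ = sin η ⟨ν, ν⟩`. Both `N` and `ν` lie in the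
orthogonal complement of the timelike vector `T`, which is spacelike; Cauchy–Schwarz there gives
`⟨N, ν⟩² ≤ ⟨ν, ν⟩`, and the inequality follows.
-/

/-- The Minkowski scalar product on `ℝ⁴₁`:
`⟨x,y⟩ = -x₁y₁ + x₂y₂ + x₃y₃ + x₄y₄`. -/
noncomputable def mdot (x y : Fin 4 → ℝ) : ℝ :=
  -(x 0 * y 0) + x 1 * y 1 + x 2 * y 2 + x 3 * y 3

theorem mdot_comm (x y : Fin 4 → ℝ) : mdot x y = mdot y x := by
  simp only [mdot]; ring

@[simp] theorem mdot_add_left (x y z : Fin 4 → ℝ) : mdot (x + y) z = mdot x z + mdot y z := by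
  simp only [mdot, Pi.add_apply]; ring

@[simp] theorem mdot_add_right (x y z : Fin 4 → ℝ) : mdot x (y + z) = mdot x y + mdot x z := by
  simp only [mdot, Pi.add_apply]; ring

@[simp] theorem mdot_sub_left (x y z : Fin 4 → ℝ) : mdot (x - y) z = mdot x z - mdot y z := by
  simp only [mdot, Pi.sub_apply]; ring

@[simp] theorem mdot_sub_right (x y z : Fin 4 → ℝ) : mdot x (y - z) = mdot x y - mdot x z := by
  simp only [mdot, Pi.sub_apply]; ring

@[simp] theorem mdot_smul_left (a : ℝ) (x y : Fin 4 → ℝ) : mdot (a • x) y = a * mdot x y := by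
  simp only [mdot, Pi.smul_apply, smul_eq_mul]; ring

@[simp] theorem mdot_smul_right (a : ℝ) (x y : Fin 4 → ℝ) : mdot x (a • y) = a * mdot x y := by
  simp only [mdot, Pi.smul_apply, smul_eq_mul]; ring

theorem HasDerivAt.mdot {f g : ℝ → Fin 4 → ℝ} {f' g' : Fin 4 → ℝ} {t : ℝ}
    (hf : HasDerivAt f f' t) (hg : HasDerivAt g g' t) :
    HasDerivAt (fun u => mdot (f u) (g u)) (mdot f' (g t) + mdot (f t) g') t := by
  have hfi := hasDerivAt_pi.mp hf
  have hgi := hasDerivAt_pi.mp hg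
  refine ((((hfi 0).mul (hgi 0)).neg.add ((hfi 1).mul (hgi 1))).add
    ((hfi 2).mul (hgi 2))).add ((hfi 3).mul (hgi 3)) |>.congr_deriv ?_
  simp only [_root_.mdot]
  ring

theorem mdot_deriv_add_mdot_deriv_eq_zero {f g : ℝ → Fin 4 → ℝ} {c t : ℝ}
    (hf : DifferentiableAt ℝ f t) (hg : DifferentiableAt ℝ g t) (h : ∀ u, mdot (f u) (g u) = c) :
    mdot (deriv f t) (g t) + mdot (f t) (deriv g t) = 0 := by
  have hd := hf.hasDerivAt.mdot hg.hasDerivAt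
  simp only [h] at hd
  exact hd.unique (hasDerivAt_const t c)

theorem mdot_deriv_eq_zero_of_mdot_self_const {f : ℝ → Fin 4 → ℝ} {c t : ℝ}
    (hf : DifferentiableAt ℝ f t) (h : ∀ u, mdot (f u) (f u) = c) :
    mdot (f t) (deriv f t) = 0 := by
  have := mdot_deriv_add_mdot_deriv_eq_zero hf hf h
  rw [mdot_comm] at this
  linarith

theorem mdot_deriv_eq_zero_of_mdot_const {f : ℝ → Fin 4 → ℝ} {q : Fin 4 → ℝ} {c t : ℝ}
    (hf : DifferentiableAt ℝ f t) (h : ∀ u, mdot (f u) q = c) :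
    mdot (deriv f t) q = 0 := by
  simpa [mdot] using mdot_deriv_add_mdot_deriv_eq_zero hf (differentiableAt_const q) h

theorem mdot_self_nonneg_of_mdot_eq_zero {u v : Fin 4 → ℝ} (hv : mdot v v < 0)
    (huv : mdot u v = 0) : 0 ≤ mdot u u := by
  simp only [mdot] at *
  have hcs : (u 1 * v 1 + u 2 * v 2 + u 3 * v 3) ^ 2 ≤
      (u 1 ^ 2 + u 2 ^ 2 + u 3 ^ 2) * (v 1 ^ 2 + v 2 ^ 2 + v 3 ^ 2) := by
    nlinarith [sq_nonneg (u 1 * v 2 - u 2 * v 1), sq_nonneg (u 1 * v 3 - u 3 * v 1),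
      sq_nonneg (u 2 * v 3 - u 3 * v 2)]
  have hv0 : 0 < v 0 ^ 2 := by nlinarith [sq_nonneg (v 1), sq_nonneg (v 2), sq_nonneg (v 3)]
  have : u 0 ^ 2 * v 0 ^ 2 ≤ (u 1 ^ 2 + u 2 ^ 2 + u 3 ^ 2) * v 0 ^ 2 := by
    calc u 0 ^ 2 * v 0 ^ 2 = (u 1 * v 1 + u 2 * v 2 + u 3 * v 3) ^ 2 := by
          rw [← mul_pow]; congr 1; linarith
      _ ≤ (u 1 ^ 2 + u 2 ^ 2 + u 3 ^ 2) * (v 1 ^ 2 + v 2 ^ 2 + v 3 ^ 2) := hcs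
      _ ≤ (u 1 ^ 2 + u 2 ^ 2 + u 3 ^ 2) * v 0 ^ 2 := by gcongr; linarith
  nlinarith [le_of_mul_le_mul_right this hv0]

theorem mdot_sq_le_of_mdot_eq_zero {x y v : Fin 4 → ℝ} (hv : mdot v v < 0)
    (hx : mdot x v = 0) (hy : mdot y v = 0) : mdot x y ^ 2 ≤ mdot x x * mdot y y := by
  have h := discrim_le_zero (a := mdot y y) (b := -2 * mdot x y) (c := mdot x x) fun l => by
    have := mdot_self_nonneg_of_mdot_eq_zero hv (u := x - l • y) (by simp [hx, hy])
    simp only [mdot_sub_left, mdot_sub_right, mdot_smul_left, mdot_smul_right,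
      mdot_comm y x] at this
    linarith
  rw [discrim] at h
  linarith

theorem mdot_gram_eq (v : Fin 4 → Fin 4 → ℝ) :
    Matrix.of (fun i j => mdot (v i) (v j)) =
      Matrix.of v * Matrix.diagonal ![-1, 1, 1, 1] * (Matrix.of v).transpose := by
  ext i j
  simp [Matrix.mul_apply, Fin.sum_univ_four, mdot]

theorem det_sq_eq_neg_det_mdot_gram (v : Fin 4 → Fin 4 → ℝ) :
    (Matrix.of v).det ^ 2 = -(Matrix.of fun i j => mdot (v i) (v j)).det := by
  rw [mdot_gram_eq, Matrix.det_mul, Matrix.det_mul, Matrix.det_transpose, Matrix.det_diagonal]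
  simp [Fin.prod_univ_four]
  ring

theorem det_sq_of_mdot_orthogonal {a b c d : Fin 4 → ℝ} (hab : mdot a b = 0) (hac : mdot a c = 0)
    (had : mdot a d = 0) (hbc : mdot b c = 0) (hbd : mdot b d = 0) (hcd : mdot c d = 0) :
    (Matrix.of ![a, b, c, d]).det ^ 2 = -(mdot a a * mdot b b * mdot c c * mdot d d) := by
  have hgram : (Matrix.of fun i j => mdot (![a, b, c, d] i) (![a, b, c, d] j)) =
      Matrix.diagonal ![mdot a a, mdot b b, mdot c c, mdot d d] := by
    ext i j
    fin_cases i <;> fin_cases j <;>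
      simp [hab, hac, had, hbc, hbd, hcd, mdot_comm b a, mdot_comm c a, mdot_comm d a,
        mdot_comm c b, mdot_comm d b, mdot_comm d c]
  rw [det_sq_eq_neg_det_mdot_gram, hgram, Matrix.det_diagonal, Fin.prod_univ_four]
  simp [mul_assoc]

/-- The acceleration of `γ` within the pseudo-sphere: `γ''` minus its normal component
`⟨γ'', γ⟩ γ = γ`. -/
noncomputable def sphereAccel (γ : ℝ → Fin 4 → ℝ) (t : ℝ) : Fin 4 → ℝ :=
  deriv (deriv γ) t - γ t

section PseudoSphericalCurve

variable {p : Fin 4 → ℝ} {γ : ℝ → Fin 4 → ℝ}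

theorem mdot_derivs_of_pseudoSpherical (hγ : Differentiable ℝ γ)
    (hγ₂ : Differentiable ℝ (deriv γ)) (hγ1 : ∀ t, mdot (γ t) (γ t) = 1)
    (hγp : ∀ t, mdot (γ t) p = 0) (hγ' : ∀ t, mdot (deriv γ t) (deriv γ t) = -1) (t : ℝ) :
    mdot (γ t) (deriv γ t) = 0 ∧ mdot (deriv γ t) p = 0 ∧
      mdot (γ t) (deriv (deriv γ) t) = 1 ∧ mdot (deriv γ t) (deriv (deriv γ) t) = 0 ∧
      mdot (deriv (deriv γ) t) p = 0 := by
  have h01 u := mdot_deriv_eq_zero_of_mdot_self_const (hγ u) hγ1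
  have h1p u := mdot_deriv_eq_zero_of_mdot_const (hγ u) hγp
  have h02 := mdot_deriv_add_mdot_deriv_eq_zero (hγ t) (hγ₂ t) h01
  refine ⟨h01 t, h1p t, by linarith [hγ' t], mdot_deriv_eq_zero_of_mdot_self_const (hγ₂ t) hγ',
    mdot_deriv_eq_zero_of_mdot_const (hγ₂ t) h1p⟩

theorem sphereAccel_orthogonal (hγ : Differentiable ℝ γ)
    (hγ₂ : Differentiable ℝ (deriv γ)) (hγ1 : ∀ t, mdot (γ t) (γ t) = 1)
    (hγp : ∀ t, mdot (γ t) p = 0) (hγ' : ∀ t, mdot (deriv γ t) (deriv γ t) = -1) (t : ℝ) :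
    mdot (γ t) (sphereAccel γ t) = 0 ∧ mdot (deriv γ t) (sphereAccel γ t) = 0 ∧
      mdot p (sphereAccel γ t) = 0 := by
  obtain ⟨h01, h1p, h02, h12, h2p⟩ := mdot_derivs_of_pseudoSpherical hγ hγ₂ hγ1 hγp hγ' t
  simp only [sphereAccel, mdot_sub_right]
  refine ⟨by rw [h02, hγ1, sub_self], by rw [h12, mdot_comm, h01]; simp, ?_⟩
  rw [mdot_comm, h2p, mdot_comm, hγp]; simp

theorem det_sq_eq_mdot_sphereAccel (hp : mdot p p = 1) (hγ : Differentiable ℝ γ)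
    (hγ₂ : Differentiable ℝ (deriv γ)) (hγ1 : ∀ t, mdot (γ t) (γ t) = 1)
    (hγp : ∀ t, mdot (γ t) p = 0) (hγ' : ∀ t, mdot (deriv γ t) (deriv γ t) = -1) (t : ℝ) :
    (Matrix.of ![γ t, deriv γ t, deriv (deriv γ) t, p]).det ^ 2 =
      mdot (sphereAccel γ t) (sphereAccel γ t) := by
  obtain ⟨h01, h1p, -⟩ := mdot_derivs_of_pseudoSpherical hγ hγ₂ hγ1 hγp hγ' t
  obtain ⟨h0ν, h1ν, hpν⟩ := sphereAccel_orthogonal hγ hγ₂ hγ1 hγp hγ' t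
  set M := Matrix.of ![γ t, deriv γ t, deriv (deriv γ) t, p]
  have hrow : Matrix.of ![γ t, deriv γ t, sphereAccel γ t, p] =
      M.updateRow 2 (M 2 + (-1 : ℝ) • M 0) := by
    ext i j
    fin_cases i <;> simp [M, sphereAccel, sub_eq_add_neg]
  rw [← M.det_updateRow_add_smul_self (by decide : (2 : Fin 4) ≠ 0), ← hrow,
    det_sq_of_mdot_orthogonal h01 h0ν (hγp t) h1ν h1p (by rw [mdot_comm, hpν]), hγ1, hγ', hp]
  ring

end PseudoSphericalCurve

-- `α = cos η • p + sin η • γ` is `α` written in polar form about `p`.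
section PolarCurve

variable {p : Fin 4 → ℝ} {γ α : ℝ → Fin 4 → ℝ} {η : ℝ → ℝ}

theorem hasDerivAt_polar (hγ : Differentiable ℝ γ) (hη : Differentiable ℝ η)
    (hα : ∀ u, α u = cos (η u) • p + sin (η u) • γ u) (t : ℝ) :
    HasDerivAt α (deriv η t • (cos (η t) • γ t - sin (η t) • p) + sin (η t) • deriv γ t) t := by
  rw [funext hα]
  refine (((hη t).hasDerivAt.cos.smul_const p).add ((hη t).hasDerivAt.sin.smul (hγ t).hasDerivAt))
    |>.congr_deriv ?_
  ext i
  simp only [Pi.add_apply, Pi.sub_apply, Pi.smul_apply, smul_eq_mul]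
  ring

theorem hasDerivAt_deriv_polar (hγ : Differentiable ℝ γ) (hγ₂ : Differentiable ℝ (deriv γ))
    (hη : Differentiable ℝ η) (hη₂ : Differentiable ℝ (deriv η))
    (hα : ∀ u, α u = cos (η u) • p + sin (η u) • γ u) (t : ℝ) :
    HasDerivAt (deriv α)
      (deriv (deriv η) t • (cos (η t) • γ t - sin (η t) • p)
        + deriv η t • (deriv η t • (-sin (η t) • γ t - cos (η t) • p) + cos (η t) • deriv γ t)
        + (cos (η t) * deriv η t) • deriv γ t + sin (η t) • deriv (deriv γ) t) t := by
  rw [funext fun u => (hasDerivAt_polar hγ hη hα u).deriv]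
  have hη' := (hη t).hasDerivAt
  refine ((hη₂ t).hasDerivAt.smul ((hη'.cos.smul (hγ t).hasDerivAt).sub (hη'.sin.smul_const p))).add
    (hη'.sin.smul (hγ₂ t).hasDerivAt) |>.congr_deriv ?_
  ext i
  simp only [Pi.add_apply, Pi.sub_apply, Pi.smul_apply, Pi.smul_apply', smul_eq_mul]
  ring

theorem mdot_deriv_polar_self (hp : mdot p p = 1) (hγ : Differentiable ℝ γ)
    (hη : Differentiable ℝ η) (hγ1 : ∀ t, mdot (γ t) (γ t) = 1) (hγp : ∀ t, mdot (γ t) p = 0)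
    (hγ' : ∀ t, mdot (deriv γ t) (deriv γ t) = -1)
    (hα : ∀ u, α u = cos (η u) • p + sin (η u) • γ u) (t : ℝ) :
    mdot (deriv α t) (deriv α t) = deriv η t ^ 2 - sin (η t) ^ 2 := by
  have h01 := mdot_deriv_eq_zero_of_mdot_self_const (hγ t) hγ1
  have h1p := mdot_deriv_eq_zero_of_mdot_const (hγ t) hγp
  rw [(hasDerivAt_polar hγ hη hα t).deriv]
  simp only [mdot_add_left, mdot_add_right, mdot_sub_left, mdot_sub_right, mdot_smul_left,
    mdot_smul_right, mdot_comm p, mdot_comm (deriv γ t) (γ t), hp, hγ1, hγp, hγ', h01, h1p]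
  nlinarith [sin_sq_add_cos_sq (η t)]

theorem polar_orthogonal_sphereAccel (hγ : Differentiable ℝ γ)
    (hγ₂ : Differentiable ℝ (deriv γ)) (hη : Differentiable ℝ η)
    (hγ1 : ∀ t, mdot (γ t) (γ t) = 1) (hγp : ∀ t, mdot (γ t) p = 0)
    (hγ' : ∀ t, mdot (deriv γ t) (deriv γ t) = -1)
    (hα : ∀ u, α u = cos (η u) • p + sin (η u) • γ u) (t : ℝ) :
    mdot (α t) (sphereAccel γ t) = 0 ∧ mdot (deriv α t) (sphereAccel γ t) = 0 := by
  obtain ⟨h0ν, h1ν, hpν⟩ := sphereAccel_orthogonal hγ hγ₂ hγ1 hγp hγ' t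
  rw [hα, (hasDerivAt_polar hγ hη hα t).deriv]
  simp [h0ν, h1ν, hpν]

theorem mdot_deriv_tangent_sphereAccel (hγ : Differentiable ℝ γ)
    (hγ₂ : Differentiable ℝ (deriv γ)) (hη : Differentiable ℝ η)
    (hη₂ : Differentiable ℝ (deriv η)) (hγ1 : ∀ t, mdot (γ t) (γ t) = 1)
    (hγp : ∀ t, mdot (γ t) p = 0) (hγ' : ∀ t, mdot (deriv γ t) (deriv γ t) = -1)
    (hα : ∀ u, α u = cos (η u) • p + sin (η u) • γ u) {w : ℝ → ℝ} {T : ℝ → Fin 4 → ℝ}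
    (hT : ∀ u, T u = (w u)⁻¹ • deriv α u) {t : ℝ} (hw : DifferentiableAt ℝ w t)
    (hw0 : w t ≠ 0) :
    mdot (deriv T t) (sphereAccel γ t) =
      sin (η t) / w t * mdot (sphereAccel γ t) (sphereAccel γ t) := by
  obtain ⟨h0ν, h1ν, hpν⟩ := sphereAccel_orthogonal hγ hγ₂ hγ1 hγp hγ' t
  have h1αν := (polar_orthogonal_sphereAccel hγ hγ₂ hη hγ1 hγp hγ' hα t).2
  have h2ν : mdot (deriv (deriv γ) t) (sphereAccel γ t) =
      mdot (sphereAccel γ t) (sphereAccel γ t) := by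
    rw [sphereAccel, mdot_sub_left, ← sphereAccel, h0ν, sub_zero]
  have hT' := (hw.hasDerivAt.inv hw0).smul (hasDerivAt_deriv_polar hγ hγ₂ hη hη₂ hα t)
  rw [show T = w⁻¹ • deriv α from funext hT, hT'.deriv]
  simp only [mdot_add_left, mdot_sub_left, mdot_smul_left, h0ν, h1ν, h1αν, h2ν, hpν, mul_zero,
    sub_zero, add_zero, zero_add, Pi.inv_apply]
  ring

theorem mdot_tangent_self_neg (hp : mdot p p = 1) (hγ : Differentiable ℝ γ)
    (hη : Differentiable ℝ η) (hγ1 : ∀ t, mdot (γ t) (γ t) = 1) (hγp : ∀ t, mdot (γ t) p = 0)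
    (hγ' : ∀ t, mdot (deriv γ t) (deriv γ t) = -1)
    (hα : ∀ u, α u = cos (η u) • p + sin (η u) • γ u) {w : ℝ → ℝ} {T : ℝ → Fin 4 → ℝ}
    (hT : ∀ u, T u = (w u)⁻¹ • deriv α u) {t : ℝ} (htimelike : deriv η t ^ 2 < sin (η t) ^ 2)
    (hw0 : w t ≠ 0) :
    mdot (T t) (T t) < 0 := by
  rw [hT, mdot_smul_left, mdot_smul_right, mdot_deriv_polar_self hp hγ hη hγ1 hγp hγ' hα,
    ← mul_assoc]
  exact mul_neg_of_pos_of_neg (mul_self_pos.2 (inv_ne_zero hw0)) (sub_neg.2 htimelike)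

end PolarCurve

theorem mul_sq_le_sq_of_mul_eq_mul {K s a x : ℝ} (hx : x ^ 2 ≤ K) (h : a * x = s * K) :
    K * s ^ 2 ≤ a ^ 2 := by
  rcases (le_trans (sq_nonneg x) hx).eq_or_lt with hK | hK
  · rw [← hK, zero_mul]
    exact sq_nonneg a
  refine le_of_mul_le_mul_left ?_ hK
  calc K * (K * s ^ 2) = (a * x) ^ 2 := by rw [h]; ring
    _ = a ^ 2 * x ^ 2 := by ring
    _ ≤ a ^ 2 * K := by gcongr
    _ = K * a ^ 2 := by ring

theorem extremal_inequality_general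
    (p : Fin 4 → ℝ) (hp : mdot p p = 1)
    (γ : ℝ → Fin 4 → ℝ) (hγsm : ContDiff ℝ (⊤ : ℕ∞) γ)
    (hγ1 : ∀ t, mdot (γ t) (γ t) = 1)
    (hγp : ∀ t, mdot (γ t) p = 0)
    (hγ' : ∀ t, mdot (deriv γ t) (deriv γ t) = -1)
    (η : ℝ → ℝ) (hηsm : ContDiff ℝ (⊤ : ℕ∞) η)
    (htimelike : ∀ t, (deriv η t) ^ 2 < Real.sin (η t) ^ 2)
    (w : ℝ → ℝ)
    (hw : ∀ t, w t = Real.sqrt (Real.sin (η t) ^ 2 - (deriv η t) ^ 2))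
    (α : ℝ → Fin 4 → ℝ)
    (hα : ∀ t, α t = Real.cos (η t) • p + Real.sin (η t) • γ t)
    (T : ℝ → Fin 4 → ℝ) (hT : ∀ t, T t = (w t)⁻¹ • deriv α t)
    (N : ℝ → Fin 4 → ℝ)
    (κg : ℝ → ℝ)
    (hN1 : ∀ t, mdot (N t) (N t) = 1)
    (hTN : ∀ t, mdot (T t) (N t) = 0)
    (hF1 : ∀ t, deriv T t = w t • (α t + κg t • N t))
    (κγ : ℝ → ℝ)
    (hκγ : ∀ t, κγ t = (Matrix.of ![γ t, deriv γ t, deriv (deriv γ) t, p]).det)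
    :
    ∀ t, κγ t ^ 2 * Real.sin (η t) ^ 2 ≤ w t ^ 4 * κg t ^ 2 := by
  intro t
  obtain ⟨hγd, hγ'sm⟩ := contDiff_infty_iff_deriv.mp hγsm
  obtain ⟨hηd, hη'sm⟩ := contDiff_infty_iff_deriv.mp hηsm
  have hγ₂ := (contDiff_infty_iff_deriv.mp hγ'sm).1
  have hη₂ := (contDiff_infty_iff_deriv.mp hη'sm).1
  set ν := sphereAccel γ t
  have hpos : 0 < sin (η t) ^ 2 - deriv η t ^ 2 := sub_pos.mpr (htimelike t)
  have hw0 : 0 < w t := hw t ▸ sqrt_pos.mpr hpos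
  have hwd : DifferentiableAt ℝ w t := by
    rw [funext hw]
    exact (((hηd t).sin.pow 2).sub ((hη₂ t).pow 2)).sqrt hpos.ne'
  obtain ⟨hαν, hα'ν⟩ := polar_orthogonal_sphereAccel hγd hγ₂ hηd hγ1 hγp hγ' hα t
  have hNν : w t ^ 2 * κg t * mdot (N t) ν = sin (η t) * mdot ν ν := by
    have h := mdot_deriv_tangent_sphereAccel hγd hγ₂ hηd hη₂ hγ1 hγp hγ' hα hT hwd hw0.ne'
    rw [hF1, mdot_smul_left, mdot_add_left, mdot_smul_left, hαν] at h
    field_simp at h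
    linarith
  have hCS : mdot (N t) ν ^ 2 ≤ mdot ν ν := by
    have h := mdot_sq_le_of_mdot_eq_zero (x := N t) (y := ν)
      (mdot_tangent_self_neg hp hγd hηd hγ1 hγp hγ' hα hT (htimelike t) hw0.ne')
      (by rw [mdot_comm, hTN])
      (by rw [hT, mdot_comm, mdot_smul_left, hα'ν, mul_zero])
    rwa [hN1, one_mul] at h
  rw [hκγ, det_sq_eq_mdot_sphereAccel hp hγd hγ₂ hγ1 hγp hγ' t]
  convert mul_sq_le_sq_of_mul_eq_mul hCS hNν using 1
  ring

/-- Extremal inequality: `κ_γ² sin²(η) ≤ w⁴ κ_g²` for the pseudo-spherical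
projection `γ` of a timelike curve `α(t) = cos(η t) • p + sin(η t) • γ(t)` in `S³₁`. -/
theorem extremal_inequality
    (p : Fin 4 → ℝ) (hp : mdot p p = 1)
    (γ : ℝ → Fin 4 → ℝ) (hγsm : ContDiff ℝ (⊤ : ℕ∞) γ)
    (hγ1 : ∀ t, mdot (γ t) (γ t) = 1)
    (hγp : ∀ t, mdot (γ t) p = 0)
    (hγ' : ∀ t, mdot (deriv γ t) (deriv γ t) = -1)
    (η : ℝ → ℝ) (hηsm : ContDiff ℝ (⊤ : ℕ∞) η)
    (hsinpos : ∀ t, 0 < Real.sin (η t))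
    (htimelike : ∀ t, (deriv η t) ^ 2 < Real.sin (η t) ^ 2)
    (w : ℝ → ℝ)
    (hw : ∀ t, w t = Real.sqrt (Real.sin (η t) ^ 2 - (deriv η t) ^ 2))
    (α : ℝ → Fin 4 → ℝ)
    (hα : ∀ t, α t = Real.cos (η t) • p + Real.sin (η t) • γ t)
    (T : ℝ → Fin 4 → ℝ) (hT : ∀ t, T t = (w t)⁻¹ • deriv α t)
    (N B : ℝ → Fin 4 → ℝ) (hNsm : ContDiff ℝ (⊤ : ℕ∞) N)
    (hBsm : ContDiff ℝ (⊤ : ℕ∞) B)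
    (κg τg : ℝ → ℝ) (hκsm : ContDiff ℝ (⊤ : ℕ∞) κg)
    (hτsm : ContDiff ℝ (⊤ : ℕ∞) τg)
    (hκpos : ∀ t, 0 < κg t)
    (hN1 : ∀ t, mdot (N t) (N t) = 1)
    (hB1 : ∀ t, mdot (B t) (B t) = 1)
    (hαT : ∀ t, mdot (α t) (T t) = 0)
    (hαN : ∀ t, mdot (α t) (N t) = 0)
    (hαB : ∀ t, mdot (α t) (B t) = 0)
    (hTN : ∀ t, mdot (T t) (N t) = 0)
    (hTB : ∀ t, mdot (T t) (B t) = 0)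
    (hNB : ∀ t, mdot (N t) (B t) = 0)
    (hF1 : ∀ t, deriv T t = w t • (α t + κg t • N t))
    (hF2 : ∀ t, deriv N t = w t • (κg t • T t + τg t • B t))
    (hF3 : ∀ t, deriv B t = -(w t * τg t) • N t)
    (κγ : ℝ → ℝ)
    (hκγ : ∀ t, κγ t = (Matrix.of ![γ t, deriv γ t, deriv (deriv γ) t, p]).det)
    :
    ∀ t, κγ t ^ 2 * Real.sin (η t) ^ 2 ≤ w t ^ 4 * κg t ^ 2 :=
  extremal_inequality_general p hp γ hγsm hγ1 hγp hγ' η hηsm htimelike w hw α hα T hT N κg hN1 hTN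
    hF1 κγ hκγ
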